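/- Let n ≥ 2 and 0 ≤ b ≤ n−1 be integers. Then the n-qubit AQFT with approximation level b is exactly equal to the following rank-2^b matrix product operator: for all σ, τ ∈ {0,1}^n, F_{n,b}(σ_{1:n}, τ_{1:n}) = Σ_{α_1, …, α_{n−1} = 0}^{2^b − 1} A_L^{α_1}(σ_1, τ_1) · (Π_{m=2}^{n−1} A^{α_{m−1} α_m}(σ_m, τ_m)) · A^{α_{n−1}, 0}(σ_n, τ_n), where A^{αβ}(σ,τ) = χ^α((σ+u^β)/2)·exp(−πi(σ+u^β)τ), A_L^β(σ,τ) = exp(−πi(σ+u^β)τ), u^β = β/2^b, and χ^α is the indicator function of [α/2^b, (α+1)/2^b). -/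

import Mathlib

set_option maxHeartbeats 1000000


/-- `χ^α`: the indicator function of the dyadic interval `[α/2^b, (α+1)/2^b)`. -/
noncomputable def chi (b : ℕ) (α : Fin (2 ^ b)) (x : ℝ) : ℝ :=
  if ((α : ℕ) : ℝ) / 2 ^ b ≤ x ∧ x < (((α : ℕ) : ℝ) + 1) / 2 ^ b then 1 else 0

/-- The AQFT MPO core `A^{αβ}(σ,τ) = χ^α((σ+u^β)/2)·exp(−πi(σ+u^β)τ)` with `u^β = β/2^b`. -/
noncomputable def AQcore (b : ℕ) (α β : Fin (2 ^ b)) (σ τ : Fin 2) : ℂ :=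
  ((chi b α ((((σ : ℕ) : ℝ) + ((β : ℕ) : ℝ) / 2 ^ b) / 2) : ℝ) : ℂ) *
    Complex.exp (-(Real.pi : ℂ) * Complex.I *
      (((((σ : ℕ) : ℝ) + ((β : ℕ) : ℝ) / 2 ^ b : ℝ) : ℂ)) * ((τ : ℕ) : ℂ))

/-- The leftmost AQFT MPO core `A_L^β(σ,τ) = exp(−πi(σ+u^β)τ)`. -/
noncomputable def AQL (b : ℕ) (β : Fin (2 ^ b)) (σ τ : Fin 2) : ℂ :=
  Complex.exp (-(Real.pi : ℂ) * Complex.I *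
    (((((σ : ℕ) : ℝ) + ((β : ℕ) : ℝ) / 2 ^ b : ℝ) : ℂ)) * ((τ : ℕ) : ℂ))

/-- The AQFT tensor with approximation level `b`:
`F_{m,b}(σ,τ) = exp(−πi Σ_{k=1}^m Σ_{l=max(1,k−b)}^m 2^{−k} 2^{l} σ_k τ_l)`. -/
noncomputable def Faqft (m b : ℕ) (σ τ : Fin m → Fin 2) : ℂ :=
  Complex.exp (-(Real.pi : ℂ) * Complex.I *
    ((∑ k : Fin m, ∑ l ∈ Finset.univ.filter
        (fun l : Fin m => max 1 ((k : ℕ) + 1 - b) ≤ (l : ℕ) + 1),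
      (2 : ℝ) ^ ((l : ℕ) + 1) / (2 : ℝ) ^ ((k : ℕ) + 1) *
        ((σ k : ℕ) : ℝ) * ((τ l : ℕ) : ℝ) : ℝ) : ℂ))

/-- The "carry" value at site `s`. -/
def ggAux (b n : ℕ) (S : ℕ → ℕ) (s : ℕ) : ℕ :=
  ∑ j ∈ Finset.Ico (s+1) (min n (s+b+1)), 2^(b+s-j) * S j

lemma sum_range_two_pow (b : ℕ) : ∑ i ∈ Finset.range b, 2^i = 2^b - 1 := by
  induction b with
  | zero => simp
  | succ b ih =>
    rw [Finset.sum_range_succ, ih, pow_succ]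
    have : 1 ≤ 2^b := Nat.one_le_two_pow
    omega

lemma ggAux_lt (b n : ℕ) (S : ℕ → ℕ) (hS : ∀ j, S j ≤ 1) (s : ℕ) :
    ggAux b n S s < 2^b := by
  have h1 : ggAux b n S s ≤ ∑ j ∈ Finset.Ico (s+1) (s+b+1), 2^(b+s-j) := by
    refine le_trans (Finset.sum_le_sum_of_subset ?_) (Finset.sum_le_sum ?_)
    · exact Finset.Ico_subset_Ico le_rfl (min_le_right _ _)
    · intro j _
      calc 2^(b+s-j) * S j ≤ 2^(b+s-j) * 1 := Nat.mul_le_mul_left _ (hS j)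
        _ = 2^(b+s-j) := by ring
  have h2 : ∑ j ∈ Finset.Ico (s+1) (s+b+1), 2^(b+s-j) = 2^b - 1 := by
    rw [Finset.sum_Ico_eq_sum_range]
    have hr : ∀ i ∈ Finset.range (s+b+1-(s+1)), 2^(b+s-(s+1+i)) = 2^(b-1-i) := by
      intro i hi
      congr 1
      omega
    rw [Finset.sum_congr rfl hr]
    have : s+b+1-(s+1) = b := by omega
    rw [this, ← Finset.sum_range_reflect]
    rw [← sum_range_two_pow b]
    exact Finset.sum_congr rfl (fun i hi => by
      simp only [Finset.mem_range] at hi; congr 1; omega)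
  have : 1 ≤ 2^b := Nat.one_le_two_pow
  omega

lemma ggAux_last (b n : ℕ) (S : ℕ → ℕ) (s : ℕ) (h : n ≤ s + 1) :
    ggAux b n S s = 0 := by
  unfold ggAux
  rw [Finset.Ico_eq_empty, Finset.sum_empty]
  simp only [not_lt]
  exact le_trans (min_le_left _ _) h

lemma ggAux_rec (b n : ℕ) (S : ℕ → ℕ) (s : ℕ) (hs : s + 1 < n) :
    2^b * S (s+1) + ggAux b n S (s+1)
      = 2 * ggAux b n S s + (if s+b+1 < n then S (s+b+1) else 0) := by
  have h2g : 2 * ggAux b n S s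
      = ∑ j ∈ Finset.Ico (s+1) (min n (s+b+1)), 2^(b+s+1-j) * S j := by
    unfold ggAux
    rw [Finset.mul_sum]
    refine Finset.sum_congr rfl (fun j hj => ?_)
    simp only [Finset.mem_Ico] at hj
    have : b+s+1-j = (b+s-j)+1 := by omega
    rw [this, pow_succ]
    ring
  have hlhs : 2^b * S (s+1) + ggAux b n S (s+1)
      = ∑ j ∈ Finset.Ico (s+1) (min n (s+b+2)), 2^(b+s+1-j) * S j := by
    unfold ggAux
    rw [Finset.sum_eq_sum_Ico_succ_bot (by omega : s+1 < min n (s+b+2))]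
    have e1 : b+s+1-(s+1) = b := by omega
    have e2 : s + 1 + b + 1 = s + b + 2 := by omega
    have e3 : ∀ j, b + (s+1) - j = b+s+1-j := fun j => by omega
    simp only [e1, e2, e3]
  rw [hlhs, h2g]
  by_cases hc : s + b + 1 < n
  · rw [if_pos hc]
    have h1 : min n (s+b+2) = s+b+2 := by omega
    have h2 : min n (s+b+1) = s+b+1 := by omega
    rw [h1, h2, Finset.sum_Ico_succ_top (by omega : s+1 ≤ s+b+1)]
    have : b+s+1-(s+b+1) = 0 := by omega
    rw [this, pow_zero, one_mul]
  · rw [if_neg hc]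
    have h1 : min n (s+b+2) = n := by omega
    have h2 : min n (s+b+1) = n := by omega
    rw [h1, h2, add_zero]

lemma chi_spec (b : ℕ) (α : Fin (2^b)) (Sv G G' : ℕ)
    (h1 : 2*G ≤ 2^b*Sv + G') (h2 : 2^b*Sv + G' ≤ 2*G+1) :
    chi b α (((Sv:ℝ) + (G':ℝ)/2^b)/2) = if (α:ℕ) = G then 1 else 0 := by
  have hpow : (0:ℝ) < 2^b := by positivity
  set N : ℕ := 2^b*Sv + G' with hN
  have hx : ((Sv:ℝ) + (G':ℝ)/2^b)/2 = (N : ℝ) / 2^(b+1) := by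
    rw [hN]; push_cast; rw [pow_succ]; field_simp
  unfold chi
  rw [hx]
  have key : (((α:ℕ):ℝ) / 2 ^ b ≤ (N : ℝ) / 2^(b+1) ∧
      (N : ℝ) / 2^(b+1) < (((α:ℕ):ℝ) + 1) / 2 ^ b) ↔
      (2*(α:ℕ) ≤ N ∧ N < 2*((α:ℕ)+1)) := by
    rw [div_le_div_iff₀ hpow (by positivity), div_lt_div_iff₀ (by positivity) hpow,
      pow_succ]
    have e1 : ((α:ℕ):ℝ) * (2^b*2) = ((2*(α:ℕ) : ℕ) : ℝ) * 2^b := by push_cast; ring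
    have e2 : (((α:ℕ):ℝ)+1) * (2^b*2) = ((2*((α:ℕ)+1) : ℕ) : ℝ) * 2^b := by push_cast; ring
    rw [e1, e2, mul_le_mul_iff_of_pos_right hpow, mul_lt_mul_iff_of_pos_right hpow]
    constructor
    · rintro ⟨h, h'⟩; exact ⟨by exact_mod_cast h, by exact_mod_cast h'⟩
    · rintro ⟨h, h'⟩; exact ⟨by exact_mod_cast h, by exact_mod_cast h'⟩
  simp only [key]
  by_cases hg : (α:ℕ) = G
  · rw [if_pos hg, if_pos (by omega)]
  · rw [if_neg hg, if_neg (by omega)]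

lemma AQcore_eval (b : ℕ) (α β : Fin (2^b)) (σ τ : Fin 2) (G : ℕ)
    (h1 : 2*G ≤ 2^b*(σ:ℕ) + (β:ℕ)) (h2 : 2^b*(σ:ℕ) + (β:ℕ) ≤ 2*G+1) :
    AQcore b α β σ τ =
      if (α:ℕ) = G then
        Complex.exp (-(Real.pi : ℂ) * Complex.I *
          (((((σ : ℕ) : ℝ) + ((β : ℕ) : ℝ) / 2 ^ b : ℝ) : ℂ)) * ((τ : ℕ) : ℂ))
      else 0 := by
  unfold AQcore
  rw [chi_spec b α (σ:ℕ) G (β:ℕ) h1 h2]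
  split_ifs <;> simp

/-- The `n`-qubit AQFT with approximation level `b` is exactly the
rank-`2^b` MPO with internal cores `A^{αβ}`, leftmost core `A_L^β`, and rightmost core
`A^{α,0}`. -/
theorem aqft_eq_mpo (n b : ℕ) (hn : 2 ≤ n) (hb : b ≤ n - 1) (σ τ : Fin n → Fin 2) :
    Faqft n b σ τ =
      ∑ a : Fin (n - 1) → Fin (2 ^ b),
        AQL b (a ⟨0, by omega⟩) (σ ⟨0, by omega⟩) (τ ⟨0, by omega⟩) *
          (∏ i : Fin (n - 2),
            AQcore b (a ⟨i, by have := i.2; omega⟩) (a ⟨(i : ℕ) + 1, by have := i.2; omega⟩)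
              (σ ⟨(i : ℕ) + 1, by have := i.2; omega⟩)
              (τ ⟨(i : ℕ) + 1, by have := i.2; omega⟩)) *
          AQcore b (a ⟨n - 2, by omega⟩) ⟨0, by positivity⟩
            (σ ⟨n - 1, by omega⟩) (τ ⟨n - 1, by omega⟩) := by
  classical
  -- extended bit strings
  set S : ℕ → ℕ := fun j => if h : j < n then (σ ⟨j, h⟩ : ℕ) else 0 with hSdef
  set T : ℕ → ℕ := fun j => if h : j < n then (τ ⟨j, h⟩ : ℕ) else 0 with hTdef
  have hS : ∀ (j : ℕ) (h : j < n), ((σ ⟨j, h⟩ : Fin 2) : ℕ) = S j := by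
    intro j h; simp [hSdef, h]
  have hT : ∀ (j : ℕ) (h : j < n), ((τ ⟨j, h⟩ : Fin 2) : ℕ) = T j := by
    intro j h; simp [hTdef, h]
  have hS1 : ∀ j, S j ≤ 1 := by
    intro j; simp only [hSdef]; split
    · exact Fin.is_le _
    · exact Nat.zero_le 1
  have hT1 : ∀ j, T j ≤ 1 := by
    intro j; simp only [hTdef]; split
    · exact Fin.is_le _
    · exact Nat.zero_le 1
  set g : ℕ → ℕ := ggAux b n S with hgdef
  have hglt : ∀ s, g s < 2^b := fun s => ggAux_lt b n S hS1 s
  have hglast : g (n-1) = 0 := ggAux_last b n S (n-1) (by omega)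
  have hbnd : ∀ s, s + 1 < n →
      2*(g s) ≤ 2^b * S (s+1) + g (s+1) ∧ 2^b * S (s+1) + g (s+1) ≤ 2*(g s) + 1 := by
    intro s hs
    have key := ggAux_rec b n S s hs
    have hε : (if s+b+1 < n then S (s+b+1) else 0) ≤ 1 := by
      split
      · exact hS1 _
      · exact Nat.zero_le 1
    rw [← hgdef] at key
    set x := 2^b * S (s+1) with hx
    set ε := (if s+b+1 < n then S (s+b+1) else 0) with hεd
    omega
  -- the unique surviving index assignment
  set A : Fin (n-1) → Fin (2^b) := fun i => ⟨g i, hglt i⟩ with hAdef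
  -- abbreviation for the summand
  set term : (Fin (n-1) → Fin (2^b)) → ℂ := fun a =>
    AQL b (a ⟨0, by omega⟩) (σ ⟨0, by omega⟩) (τ ⟨0, by omega⟩) *
      (∏ i : Fin (n - 2),
        AQcore b (a ⟨i, by have := i.2; omega⟩) (a ⟨(i : ℕ) + 1, by have := i.2; omega⟩)
          (σ ⟨(i : ℕ) + 1, by have := i.2; omega⟩)
          (τ ⟨(i : ℕ) + 1, by have := i.2; omega⟩)) *
      AQcore b (a ⟨n - 2, by omega⟩) ⟨0, by positivity⟩
        (σ ⟨n - 1, by omega⟩) (τ ⟨n - 1, by omega⟩) with htermdef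
  have hAval : ∀ i : Fin (n-1), ((A i : Fin (2^b)) : ℕ) = g i := by
    intro i; rw [hAdef]
  have hzero : ∀ a, a ≠ A → term a = 0 := by
    intro a ha
    have hne : (Finset.univ.filter fun i => a i ≠ A i).Nonempty := by
      rcases Function.ne_iff.mp ha with ⟨i, hi⟩
      exact ⟨i, by simp [hi]⟩
    set i0 := Finset.max' _ hne with hi0def
    have hi0 : a i0 ≠ A i0 := (Finset.mem_filter.mp (Finset.max'_mem _ hne)).2
    have hmax : ∀ j, a j ≠ A j → j ≤ i0 := fun j hj =>
      Finset.le_max' _ j (by simp [hj])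
    clear_value i0
    have hi0val : (a i0 : ℕ) ≠ g i0 := by
      intro h
      exact hi0 (Fin.ext (by rw [h, hAval]))
    have hi0le : (i0 : ℕ) ≤ n - 2 := by have := i0.2; omega
    simp only [htermdef]
    by_cases hc : (i0:ℕ) = n - 2
    · have hlast : AQcore b (a ⟨n - 2, by omega⟩) ⟨0, by positivity⟩
          (σ ⟨n - 1, by omega⟩) (τ ⟨n - 1, by omega⟩) = 0 := by
        have hrec := hbnd (n-2) (by omega)
        have e : n - 2 + 1 = n - 1 := by omega
        rw [e, hglast] at hrec
        have he : (⟨n-2, by omega⟩ : Fin (n-1)) = i0 := Fin.ext (by simp [hc])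
        have hval : ((a ⟨n-2, by omega⟩ : Fin (2^b)) : ℕ) ≠ g (n-2) := by
          rw [he, ← hc]
          exact hi0val
        have h1' : 2*(g (n-2)) ≤ 2^b * ((σ ⟨n-1, by omega⟩ : Fin 2):ℕ)
            + ((⟨0, by positivity⟩ : Fin (2^b)):ℕ) := by
          simp only [hS]
          simpa using hrec.1
        have h2' : 2^b * ((σ ⟨n-1, by omega⟩ : Fin 2):ℕ)
            + ((⟨0, by positivity⟩ : Fin (2^b)):ℕ) ≤ 2*(g (n-2)) + 1 := by
          simp only [hS]
          simpa using hrec.2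
        exact (AQcore_eval b _ _ _ _ (g (n-2)) h1' h2').trans (if_neg hval)
      rw [hlast, mul_zero]
    · have hilt : (i0:ℕ) < n - 2 := by omega
      have hnext : a ⟨(i0:ℕ)+1, by omega⟩ = A ⟨(i0:ℕ)+1, by omega⟩ := by
        by_contra h
        have hle := hmax _ h
        rw [Fin.le_def] at hle
        simp only [Fin.val_mk] at hle
        omega
      have hval2 : ((a ⟨(i0:ℕ)+1, by omega⟩ : Fin (2^b)) : ℕ) = g ((i0:ℕ)+1) := by
        have := congrArg (fun x : Fin (2^b) => (x:ℕ)) hnext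
        simpa [hAval] using this
      have hrec := hbnd (i0:ℕ) (by omega)
      have he : (⟨(i0:ℕ), by omega⟩ : Fin (n-1)) = i0 := Fin.ext rfl
      have hval : ((a ⟨(i0:ℕ), by omega⟩ : Fin (2^b)) : ℕ) ≠ g (i0:ℕ) := by
        rw [he]
        exact hi0val
      have h1' : 2*(g (i0:ℕ)) ≤ 2^b * ((σ ⟨(i0:ℕ)+1, by omega⟩ : Fin 2):ℕ)
          + ((a ⟨(i0:ℕ)+1, by omega⟩ : Fin (2^b)):ℕ) := by
        simp only [hS, hval2]
        exact hrec.1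
      have h2' : 2^b * ((σ ⟨(i0:ℕ)+1, by omega⟩ : Fin 2):ℕ)
          + ((a ⟨(i0:ℕ)+1, by omega⟩ : Fin (2^b)):ℕ) ≤ 2*(g (i0:ℕ)) + 1 := by
        simp only [hS, hval2]
        exact hrec.2
      have hfac : AQcore b (a ⟨(i0:ℕ), by omega⟩) (a ⟨(i0:ℕ)+1, by omega⟩)
          (σ ⟨(i0:ℕ)+1, by omega⟩) (τ ⟨(i0:ℕ)+1, by omega⟩) = 0 :=
        (AQcore_eval b _ _ _ _ (g (i0:ℕ)) h1' h2').trans (if_neg hval)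
      have hprod : (∏ i : Fin (n - 2),
          AQcore b (a ⟨i, by have := i.2; omega⟩) (a ⟨(i : ℕ) + 1, by have := i.2; omega⟩)
            (σ ⟨(i : ℕ) + 1, by have := i.2; omega⟩)
            (τ ⟨(i : ℕ) + 1, by have := i.2; omega⟩)) = 0 :=
        Finset.prod_eq_zero (Finset.mem_univ (⟨(i0:ℕ), hilt⟩ : Fin (n-2))) hfac
      rw [hprod, mul_zero, zero_mul]
  have hsum : (∑ a : Fin (n - 1) → Fin (2 ^ b), term a) = term A :=
    Fintype.sum_eq_single A hzero
  rw [show (∑ a : Fin (n - 1) → Fin (2 ^ b),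
        AQL b (a ⟨0, by omega⟩) (σ ⟨0, by omega⟩) (τ ⟨0, by omega⟩) *
          (∏ i : Fin (n - 2),
            AQcore b (a ⟨i, by have := i.2; omega⟩) (a ⟨(i : ℕ) + 1, by have := i.2; omega⟩)
              (σ ⟨(i : ℕ) + 1, by have := i.2; omega⟩)
              (τ ⟨(i : ℕ) + 1, by have := i.2; omega⟩)) *
          AQcore b (a ⟨n - 2, by omega⟩) ⟨0, by positivity⟩
            (σ ⟨n - 1, by omega⟩) (τ ⟨n - 1, by omega⟩)) = ∑ a, term a from rfl, hsum]
  -- evaluate term A as a product of phases over range n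
  have hS' : ∀ k : Fin n, ((σ k : Fin 2) : ℕ) = S (k:ℕ) := fun k => hS (k:ℕ) k.2
  have hT' : ∀ k : Fin n, ((τ k : Fin 2) : ℕ) = T (k:ℕ) := fun k => hT (k:ℕ) k.2
  have htermA : term A = Complex.exp (-(Real.pi : ℂ) * Complex.I *
      ((∑ s ∈ Finset.range n,
        (((S s : ℝ) + (g s : ℝ)/2^b) * (T s : ℝ) : ℝ) : ℝ) : ℂ)) := by
    have hF0 : AQL b (A ⟨0, by omega⟩) (σ ⟨0, by omega⟩) (τ ⟨0, by omega⟩)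
        = Complex.exp (-(Real.pi : ℂ) * Complex.I *
          ((((S 0 : ℝ) + (g 0 : ℝ)/2^b) * (T 0 : ℝ) : ℝ) : ℂ)) := by
      unfold AQL
      simp only [hS, hT, hAval]
      congr 1
      push_cast
      ring
    have hFmid : ∀ i : Fin (n-2),
        AQcore b (A ⟨i, by have := i.2; omega⟩) (A ⟨(i : ℕ) + 1, by have := i.2; omega⟩)
          (σ ⟨(i : ℕ) + 1, by have := i.2; omega⟩) (τ ⟨(i : ℕ) + 1, by have := i.2; omega⟩)
        = Complex.exp (-(Real.pi : ℂ) * Complex.I *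
          ((((S ((i:ℕ)+1) : ℝ) + (g ((i:ℕ)+1) : ℝ)/2^b) * (T ((i:ℕ)+1) : ℝ) : ℝ) : ℂ)) := by
      intro i
      have hrec := hbnd (i:ℕ) (by have := i.2; omega)
      have h1' : 2*(g (i:ℕ)) ≤ 2^b * ((σ ⟨(i:ℕ)+1, by have := i.2; omega⟩ : Fin 2):ℕ)
          + ((A ⟨(i:ℕ)+1, by have := i.2; omega⟩ : Fin (2^b)):ℕ) := by
        simp only [hS, hAval]
        exact hrec.1
      have h2' : 2^b * ((σ ⟨(i:ℕ)+1, by have := i.2; omega⟩ : Fin 2):ℕ)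
          + ((A ⟨(i:ℕ)+1, by have := i.2; omega⟩ : Fin (2^b)):ℕ) ≤ 2*(g (i:ℕ)) + 1 := by
        simp only [hS, hAval]
        exact hrec.2
      rw [AQcore_eval b _ _ _ _ (g (i:ℕ)) h1' h2', if_pos (hAval _)]
      simp only [hS, hT, hAval]
      congr 1
      push_cast
      ring
    have hFlast : AQcore b (A ⟨n - 2, by omega⟩) ⟨0, by positivity⟩
          (σ ⟨n - 1, by omega⟩) (τ ⟨n - 1, by omega⟩)
        = Complex.exp (-(Real.pi : ℂ) * Complex.I *
          ((((S (n-1) : ℝ) + (g (n-1) : ℝ)/2^b) * (T (n-1) : ℝ) : ℝ) : ℂ)) := by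
      have hrec := hbnd (n-2) (by omega)
      have e : n - 2 + 1 = n - 1 := by omega
      rw [e, hglast] at hrec
      have h1' : 2*(g (n-2)) ≤ 2^b * ((σ ⟨n-1, by omega⟩ : Fin 2):ℕ)
          + ((⟨0, by positivity⟩ : Fin (2^b)):ℕ) := by
        simp only [hS]
        simpa using hrec.1
      have h2' : 2^b * ((σ ⟨n-1, by omega⟩ : Fin 2):ℕ)
          + ((⟨0, by positivity⟩ : Fin (2^b)):ℕ) ≤ 2*(g (n-2)) + 1 := by
        simp only [hS]
        simpa using hrec.2
      rw [AQcore_eval b _ _ _ _ (g (n-2)) h1' h2', if_pos (hAval _)]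
      simp only [hS, hT, hglast]
      congr 1
      push_cast
      ring
    rw [htermdef]
    simp only [hF0, hFlast, hFmid]
    set F : ℕ → ℂ := fun s => Complex.exp (-(Real.pi : ℂ) * Complex.I *
        ((((S s : ℝ) + (g s : ℝ)/2^b) * (T s : ℝ) : ℝ) : ℂ)) with hFdef
    have hprod1 : (∏ i : Fin (n-2), F ((i:ℕ)+1)) = ∏ s ∈ Finset.range (n-2), F (s+1) :=
      Fin.prod_univ_eq_prod_range (fun s => F (s+1)) (n-2)
    rw [hprod1]
    have hprod2 : F 0 * (∏ s ∈ Finset.range (n-2), F (s+1)) * F (n-1)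
        = ∏ s ∈ Finset.range n, F s := by
      have e1 : n - 1 = (n-2) + 1 := by omega
      have e2 : n = (n-1) + 1 := by omega
      calc F 0 * (∏ s ∈ Finset.range (n-2), F (s+1)) * F (n-1)
          = (∏ s ∈ Finset.range ((n-2)+1), F s) * F (n-1) := by
            rw [Finset.prod_range_succ']; ring
        _ = ∏ s ∈ Finset.range n, F s := by
            rw [← e1, ← Finset.prod_range_succ, ← e2]
    rw [hprod2, ← Complex.exp_sum]
    congr 1
    rw [Complex.ofReal_sum, Finset.mul_sum]
  rw [htermA]
  -- now identify the exponents
  set E2 : ℝ := ∑ s ∈ Finset.range n, ((S s : ℝ) + (g s : ℝ)/2^b) * (T s : ℝ) with hE2def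
  set M : ℕ := ∑ k ∈ Finset.range n, ∑ l ∈ Finset.range n,
    (if k < l then 2^(l-k-1) * S k * T l else 0) with hMdef
  have step1 : (∑ k : Fin n, ∑ l ∈ Finset.univ.filter
        (fun l : Fin n => max 1 ((k : ℕ) + 1 - b) ≤ (l : ℕ) + 1),
      (2 : ℝ) ^ ((l : ℕ) + 1) / (2 : ℝ) ^ ((k : ℕ) + 1) *
        ((σ k : ℕ) : ℝ) * ((τ l : ℕ) : ℝ))
      = ∑ k ∈ Finset.range n, ∑ l ∈ Finset.range n,
          (if k ≤ l + b then (2:ℝ)^(l+1)/(2:ℝ)^(k+1) * (S k : ℝ) * (T l : ℝ) else 0) := by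
    rw [← Fin.sum_univ_eq_sum_range (fun k => ∑ l ∈ Finset.range n,
      if k ≤ l + b then (2:ℝ)^(l+1)/(2:ℝ)^(k+1) * (S k : ℝ) * (T l : ℝ) else 0) n]
    refine Finset.sum_congr rfl (fun k _ => ?_)
    rw [Finset.sum_filter]
    rw [← Fin.sum_univ_eq_sum_range (fun l => if (k:ℕ) ≤ l + b then
      (2:ℝ)^(l+1)/(2:ℝ)^((k:ℕ)+1) * (S (k:ℕ) : ℝ) * (T l : ℝ) else 0) n]
    refine Finset.sum_congr rfl (fun l _ => ?_)
    rw [hS', hT']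
    exact if_congr (by omega) rfl rfl
  have hsplit : ∀ k l : ℕ, (if k ≤ l + b then (2:ℝ)^(l+1)/(2:ℝ)^(k+1) * (S k : ℝ) * (T l : ℝ) else 0)
      = (if l ≤ k ∧ k ≤ l + b then (2:ℝ)^(l+1)/(2:ℝ)^(k+1) * (S k : ℝ) * (T l : ℝ) else 0)
        + (if k < l then (2:ℝ)^(l+1)/(2:ℝ)^(k+1) * (S k : ℝ) * (T l : ℝ) else 0) := by
    intro k l
    by_cases h1 : k ≤ l + b
    · by_cases h2 : l ≤ k
      · rw [if_pos h1, if_pos ⟨h2, h1⟩, if_neg (by omega), add_zero]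
      · rw [if_pos h1, if_neg (by tauto), if_pos (by omega), zero_add]
    · rw [if_neg h1, if_neg (by tauto), if_neg (by omega), add_zero]
  have hP : (∑ k ∈ Finset.range n, ∑ l ∈ Finset.range n,
      (if l ≤ k ∧ k ≤ l + b then (2:ℝ)^(l+1)/(2:ℝ)^(k+1) * (S k : ℝ) * (T l : ℝ) else 0))
      = E2 := by
    rw [Finset.sum_comm, hE2def]
    refine Finset.sum_congr rfl (fun l hl => ?_)
    simp only [Finset.mem_range] at hl
    have hfilter : Finset.filter (fun k => l ≤ k ∧ k ≤ l + b) (Finset.range n)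
        = Finset.Ico l (min n (l+b+1)) := by
      ext k
      simp only [Finset.mem_filter, Finset.mem_range, Finset.mem_Ico, lt_min_iff]
      omega
    rw [← Finset.sum_filter, hfilter,
      Finset.sum_eq_sum_Ico_succ_bot (by omega : l < min n (l+b+1))]
    have hgcast : (g l : ℝ) = ∑ j ∈ Finset.Ico (l+1) (min n (l+b+1)),
        (2:ℝ)^(b+l-j) * (S j : ℝ) := by
      rw [hgdef]
      unfold ggAux
      push_cast
      rfl
    have hsum2 : (∑ k ∈ Finset.Ico (l+1) (min n (l+b+1)),
        (2:ℝ)^(l+1)/(2:ℝ)^(k+1) * (S k : ℝ) * (T l : ℝ))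
        = (g l : ℝ)/2^b * (T l : ℝ) := by
      rw [hgcast, Finset.sum_div, Finset.sum_mul]
      refine Finset.sum_congr rfl (fun j hj => ?_)
      simp only [Finset.mem_Ico, lt_min_iff] at hj
      have hexp : (2:ℝ)^(l+1)/(2:ℝ)^(j+1) = (2:ℝ)^(b+l-j)/(2:ℝ)^b := by
        rw [div_eq_div_iff (by positivity) (by positivity), ← pow_add, ← pow_add]
        congr 1
        omega
      rw [hexp]
      ring
    rw [hsum2, div_self (by positivity : ((2:ℝ)^(l+1)) ≠ 0)]
    ring
  have hQ : (∑ k ∈ Finset.range n, ∑ l ∈ Finset.range n,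
      (if k < l then (2:ℝ)^(l+1)/(2:ℝ)^(k+1) * (S k : ℝ) * (T l : ℝ) else 0))
      = 2*(M:ℝ) := by
    rw [hMdef]
    push_cast
    rw [Finset.mul_sum]
    refine Finset.sum_congr rfl (fun k _ => ?_)
    rw [Finset.mul_sum]
    refine Finset.sum_congr rfl (fun l _ => ?_)
    by_cases h : k < l
    · rw [if_pos h, if_pos h]
      have hexp : (2:ℝ)^(l+1)/(2:ℝ)^(k+1) = 2*(2:ℝ)^(l-k-1) := by
        rw [div_eq_iff (by positivity)]
        have e : (2:ℝ) * 2^(l-k-1) * 2^(k+1) = 2^(1+(l-k-1)+(k+1)) := by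
          rw [pow_add, pow_add, pow_one]
          ring
        rw [e]
        congr 1
        omega
      rw [hexp]
      ring
    · rw [if_neg h, if_neg h, mul_zero]
  have hE1 : (∑ k : Fin n, ∑ l ∈ Finset.univ.filter
        (fun l : Fin n => max 1 ((k : ℕ) + 1 - b) ≤ (l : ℕ) + 1),
      (2 : ℝ) ^ ((l : ℕ) + 1) / (2 : ℝ) ^ ((k : ℕ) + 1) *
        ((σ k : ℕ) : ℝ) * ((τ l : ℕ) : ℝ))
      = E2 + 2*(M:ℝ) := by
    rw [step1]
    calc (∑ k ∈ Finset.range n, ∑ l ∈ Finset.range n,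
          (if k ≤ l + b then (2:ℝ)^(l+1)/(2:ℝ)^(k+1) * (S k : ℝ) * (T l : ℝ) else 0))
        = ∑ k ∈ Finset.range n, ∑ l ∈ Finset.range n,
            ((if l ≤ k ∧ k ≤ l + b then (2:ℝ)^(l+1)/(2:ℝ)^(k+1) * (S k : ℝ) * (T l : ℝ) else 0)
             + (if k < l then (2:ℝ)^(l+1)/(2:ℝ)^(k+1) * (S k : ℝ) * (T l : ℝ) else 0)) := by
          exact Finset.sum_congr rfl (fun k _ => Finset.sum_congr rfl (fun l _ => hsplit k l))
      _ = (∑ k ∈ Finset.range n, ∑ l ∈ Finset.range n,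
            (if l ≤ k ∧ k ≤ l + b then (2:ℝ)^(l+1)/(2:ℝ)^(k+1) * (S k : ℝ) * (T l : ℝ) else 0))
          + (∑ k ∈ Finset.range n, ∑ l ∈ Finset.range n,
            (if k < l then (2:ℝ)^(l+1)/(2:ℝ)^(k+1) * (S k : ℝ) * (T l : ℝ) else 0)) := by
          simp only [Finset.sum_add_distrib]
      _ = E2 + 2*(M:ℝ) := by rw [hP, hQ]
  unfold Faqft
  rw [hE1, Complex.ofReal_add, mul_add, Complex.exp_add]
  have hone : Complex.exp (-(Real.pi : ℂ) * Complex.I * ((2*(M:ℝ) : ℝ) : ℂ)) = 1 := by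
    have h := Complex.exp_int_mul_two_pi_mul_I (-(M:ℤ))
    rw [← h]
    congr 1
    push_cast
    ring
  rw [hone, mul_one]
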